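/- For σ = −1 and λ = 0, with 0 < θ < π and δ = sin θ, the limit as θ → π⁻ of B(θ) = ∮ (sinθ/(z·w̃))dz on the curve w̃² = −2z²(cosθ − z) − 4sin²θ (integrated over the cycle around the largest real root and infinity) equals π/2; more generally for small λ̃, lim_{θ→±π∓} B(θ) = ±π/2 + arcsin(√2 λ̃). -/

import Mathlib

noncomputable section

/-- The curve w̃² = −2z²(cosθ − z) − 4(sinθ − λ̃z)². -/
def Qt (lam θ : ℝ) (z : ℝ) : ℝ :=
  -2 * z ^ 2 * (Real.cos θ - z) - 4 * (Real.sin θ - lam * z) ^ 2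

/-- The largest real root of Qt. -/
def rt (lam θ : ℝ) : ℝ := sSup {z : ℝ | Qt lam θ z = 0}

/-- The winding number integral B(θ) = ∮ (sinθ/(z w̃)) dz over the cycle around the
largest real root and infinity. -/
def B (lam θ : ℝ) : ℝ :=
  2 * ∫ z in Set.Ioi (rt lam θ), Real.sin θ / (z * Real.sqrt (Qt lam θ z))

/-!
Substituting `z = sin θ * u` turns `Qt lam θ` into `sin θ ^ 2` times the cubic
`rescaledQt lam (sin θ) (cos θ)`, which tends, as `θ → π⁻`, to the quadratic
`rescaledQt lam 0 (-1) u = 2 u² - 4 (1 - lam u)²` with positive root `u₀ = √2 / (1 + √2 lam)`.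
Thus `B lam θ = 2 ∫_{u > R} du / (u √(rescaledQt …))`, where the largest root `R` of the cubic
tends to `u₀`. After shifting `R` to `u₀`, dominated convergence applies: the Taylor coefficients
of the cubic at its root `R` tend to those of the quadratic at `u₀`, so eventually the cubic at
`R + t` is at least half the quadratic at `u₀ + t`, and the integrands are bounded by four times
the limit integrand. The latter has the antiderivative `arcsin (√2 lam - √2 / u) / 2`, so its
integral is `π / 4 + arcsin (√2 lam) / 2`. The limit at `-π` follows from
`B lam (-θ) = - B (-lam) θ`.
-/

open Real Set MeasureTheory Filter Topology
open scoped Pointwise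

namespace WindingIntegral

def rescaledQt (l e c u : ℝ) : ℝ := 2 * e * u ^ 3 - 2 * c * u ^ 2 - 4 * (1 - l * u) ^ 2

def rescaledQtDeriv (l e c u : ℝ) : ℝ := 6 * e * u ^ 2 - 4 * c * u + 8 * l - 8 * l ^ 2 * u

def rescaledIntegrand (l e c u : ℝ) : ℝ := 1 / (u * √(rescaledQt l e c u))

def largestRoot (l e c : ℝ) : ℝ := sSup {u | rescaledQt l e c u = 0}

def limitRoot (l : ℝ) : ℝ := √2 / (1 + √2 * l)

lemma rescaledQt_add (l e c r t : ℝ) :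
    rescaledQt l e c (r + t) = rescaledQt l e c r +
      t * (rescaledQtDeriv l e c r + (6 * e * r - 2 * c - 4 * l ^ 2) * t + 2 * e * t ^ 2) := by
  simp only [rescaledQt, rescaledQtDeriv]
  ring

lemma continuous_rescaledQt (l e c : ℝ) : Continuous (rescaledQt l e c) := by
  unfold rescaledQt
  fun_prop

lemma rescaledIntegrand_nonneg (l e c : ℝ) {u : ℝ} (hu : 0 ≤ u) :
    0 ≤ rescaledIntegrand l e c u := by
  unfold rescaledIntegrand
  positivity

lemma measurable_rescaledIntegrand (l e c : ℝ) : Measurable (rescaledIntegrand l e c) := by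
  unfold rescaledIntegrand rescaledQt
  fun_prop

section Tendsto

variable {α : Type*} {L : Filter α} {e c v : α → ℝ} {e₀ c₀ v₀ : ℝ}

lemma tendsto_rescaledQt (l : ℝ) (he : Tendsto e L (𝓝 e₀)) (hc : Tendsto c L (𝓝 c₀))
    (hv : Tendsto v L (𝓝 v₀)) :
    Tendsto (fun p => rescaledQt l (e p) (c p) (v p)) L (𝓝 (rescaledQt l e₀ c₀ v₀)) := by
  unfold rescaledQt
  exact ((((he.const_mul 2).mul (hv.pow 3)).sub ((hc.const_mul 2).mul (hv.pow 2))).sub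
    (((tendsto_const_nhds.sub (hv.const_mul l)).pow 2).const_mul 4))

lemma tendsto_rescaledQtDeriv (l : ℝ) (he : Tendsto e L (𝓝 e₀)) (hc : Tendsto c L (𝓝 c₀))
    (hv : Tendsto v L (𝓝 v₀)) :
    Tendsto (fun p => rescaledQtDeriv l (e p) (c p) (v p)) L (𝓝 (rescaledQtDeriv l e₀ c₀ v₀)) := by
  unfold rescaledQtDeriv
  exact ((((he.const_mul 6).mul (hv.pow 2)).sub ((hc.const_mul 4).mul hv)).add
    tendsto_const_nhds).sub (tendsto_const_nhds.mul hv)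

end Tendsto

section LimitQuadratic

variable {l : ℝ}

lemma abs_sqrt_two_mul_lt_one (hl : 2 * l ^ 2 < 1) : |√2 * l| < 1 :=
  (sq_lt_one_iff_abs_lt_one _).1 (by rwa [mul_pow, sq_sqrt zero_le_two])

lemma one_add_sqrt_two_mul_pos (hl : 2 * l ^ 2 < 1) : 0 < 1 + √2 * l := by
  linarith [(abs_lt.1 (abs_sqrt_two_mul_lt_one hl)).1]

lemma one_sub_sqrt_two_mul_pos (hl : 2 * l ^ 2 < 1) : 0 < 1 - √2 * l := by
  linarith [(abs_lt.1 (abs_sqrt_two_mul_lt_one hl)).2]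

lemma limitRoot_pos (hl : 2 * l ^ 2 < 1) : 0 < limitRoot l :=
  div_pos (by positivity) (one_add_sqrt_two_mul_pos hl)

lemma sqrt_two_div_limitRoot : √2 / limitRoot l = 1 + √2 * l :=
  div_div_cancel₀ (by positivity)

lemma rescaledQt_limit_eq_mul (hl : 2 * l ^ 2 < 1) (u : ℝ) :
    rescaledQt l 0 (-1) u = 2 * (1 + √2 * l) * (u - limitRoot l) * ((1 - √2 * l) * u + √2) := by
  have hu0 : (1 + √2 * l) * (u - limitRoot l) = (1 + √2 * l) * u - √2 := by
    rw [limitRoot, mul_sub, mul_div_cancel₀ _ (one_add_sqrt_two_mul_pos hl).ne']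
  rw [mul_assoc 2, hu0, rescaledQt]
  linear_combination (2 * l ^ 2 * u ^ 2 - 4 * l * u + 2) * sq_sqrt (zero_le_two (α := ℝ))

lemma rescaledQt_limit_limitRoot (hl : 2 * l ^ 2 < 1) : rescaledQt l 0 (-1) (limitRoot l) = 0 := by
  rw [rescaledQt_limit_eq_mul hl, sub_self, mul_zero, zero_mul]

lemma rescaledQt_limit_neg (hl : 2 * l ^ 2 < 1) {a : ℝ} (ha : 0 ≤ a) (hau : a < limitRoot l) :
    rescaledQt l 0 (-1) a < 0 := by
  rw [rescaledQt_limit_eq_mul hl]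
  have := one_add_sqrt_two_mul_pos hl
  have := one_sub_sqrt_two_mul_pos hl
  have : 0 < (1 - √2 * l) * a + √2 := by positivity
  exact mul_neg_of_neg_of_pos (mul_neg_of_pos_of_neg (by positivity) (by linarith)) this

lemma rescaledQt_limit_pos (hl : 2 * l ^ 2 < 1) {u : ℝ} (hu : limitRoot l < u) :
    0 < rescaledQt l 0 (-1) u := by
  rw [rescaledQt_limit_eq_mul hl]
  have := one_add_sqrt_two_mul_pos hl
  have := one_sub_sqrt_two_mul_pos hl
  have : 0 < u := (limitRoot_pos hl).trans hu
  have : 0 < u - limitRoot l := by linarith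
  positivity

lemma mul_sq_le_rescaledQt_limit (hl : 2 * l ^ 2 < 1) {b u : ℝ} (hb : limitRoot l < b)
    (hbu : b ≤ u) :
    2 * ((1 - 2 * l ^ 2) * (b - limitRoot l) / b) * u ^ 2 ≤ rescaledQt l 0 (-1) u := by
  have h₀ := limitRoot_pos hl
  have h₁ := one_add_sqrt_two_mul_pos hl
  have h₂ := one_sub_sqrt_two_mul_pos hl
  have hk : 1 - 2 * l ^ 2 = (1 + √2 * l) * (1 - √2 * l) := by
    linear_combination (l ^ 2) * sq_sqrt (zero_le_two (α := ℝ))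
  have hgap : (b - limitRoot l) / b * u ≤ u - limitRoot l := by
    rw [div_mul_eq_mul_div, div_le_iff₀ (h₀.trans hb)]
    nlinarith
  have hlin : (1 - √2 * l) * u ≤ (1 - √2 * l) * u + √2 := by linarith [sqrt_nonneg 2]
  have hu : 0 ≤ u := by linarith
  rw [rescaledQt_limit_eq_mul hl, hk]
  calc 2 * ((1 + √2 * l) * (1 - √2 * l) * (b - limitRoot l) / b) * u ^ 2
      = 2 * (1 + √2 * l) * ((b - limitRoot l) / b * u) * ((1 - √2 * l) * u) := by ring
    _ ≤ 2 * (1 + √2 * l) * (u - limitRoot l) * ((1 - √2 * l) * u + √2) := by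
      have : 0 ≤ u - limitRoot l := by linarith
      gcongr

lemma rescaledQtDeriv_limit_limitRoot (hl : 2 * l ^ 2 < 1) :
    rescaledQtDeriv l 0 (-1) (limitRoot l) = 4 * √2 := by
  have h := (one_add_sqrt_two_mul_pos hl).ne'
  rw [rescaledQtDeriv, limitRoot]
  field_simp
  linear_combination (-4 * l - 4 * √2 * l ^ 2) * sq_sqrt (zero_le_two (α := ℝ))

end LimitQuadratic

section LimitIntegral

variable {l : ℝ}

lemma one_sub_sq_arcsin_arg (l : ℝ) {u : ℝ} (hu : u ≠ 0) :
    1 - (√2 * l - √2 / u) ^ 2 = rescaledQt l 0 (-1) u / (2 * u ^ 2) := by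
  rw [rescaledQt]
  field_simp
  linear_combination (-2 * (l * u - 1) ^ 2) * sq_sqrt (zero_le_two (α := ℝ))

lemma hasDerivAt_arcsin_limit {u : ℝ} (hu : 0 < u) (hQ : 0 < rescaledQt l 0 (-1) u) :
    HasDerivAt (fun x => arcsin (√2 * l - √2 / x) / 2) (rescaledIntegrand l 0 (-1) u) u := by
  have hsq := one_sub_sq_arcsin_arg l hu.ne'
  have harg : (√2 * l - √2 / u) ^ 2 < 1 := by
    have : 0 < rescaledQt l 0 (-1) u / (2 * u ^ 2) := by positivity
    linarith
  obtain ⟨h₁, h₂⟩ := abs_lt.1 ((sq_lt_one_iff_abs_lt_one _).1 harg)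
  have hinner : HasDerivAt (fun x => √2 * l - √2 / x) (√2 / u ^ 2) u := by
    simpa [div_eq_mul_inv] using ((hasDerivAt_inv hu.ne').const_mul √2).const_sub (√2 * l)
  refine (((hasDerivAt_arcsin h₁.ne' h₂.ne).comp u hinner).div_const 2).congr_deriv ?_
  rw [hsq, sqrt_div hQ.le, sqrt_mul zero_le_two, sqrt_sq hu.le, rescaledIntegrand]
  have := sqrt_pos.2 hQ
  field_simp
  exact sq_sqrt zero_le_two

lemma integral_rescaledIntegrand_limit (hl : 2 * l ^ 2 < 1) :
    IntegrableOn (rescaledIntegrand l 0 (-1)) (Ioi (limitRoot l)) ∧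
      ∫ u in Ioi (limitRoot l), rescaledIntegrand l 0 (-1) u = π / 4 + arcsin (√2 * l) / 2 := by
  have hu₀ := limitRoot_pos hl
  have hcont : ContinuousWithinAt (fun x => arcsin (√2 * l - √2 / x) / 2) (Ici (limitRoot l))
      (limitRoot l) :=
    ((continuous_arcsin.continuousAt.comp
      (continuousAt_const.sub (continuousAt_const.div continuousAt_id hu₀.ne'))).div_const
        2).continuousWithinAt
  have hderiv : ∀ u ∈ Ioi (limitRoot l),
      HasDerivAt (fun x => arcsin (√2 * l - √2 / x) / 2) (rescaledIntegrand l 0 (-1) u) u :=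
    fun u hu => hasDerivAt_arcsin_limit (hu₀.trans hu) (rescaledQt_limit_pos hl hu)
  have hnonneg : ∀ u ∈ Ioi (limitRoot l), 0 ≤ rescaledIntegrand l 0 (-1) u :=
    fun u hu => rescaledIntegrand_nonneg l 0 (-1) (hu₀.trans hu).le
  have htop : Tendsto (fun x => arcsin (√2 * l - √2 / x) / 2) atTop (𝓝 (arcsin (√2 * l) / 2)) := by
    have : Tendsto (fun x : ℝ => √2 * l - √2 / x) atTop (𝓝 (√2 * l - 0)) :=
      tendsto_const_nhds.sub (tendsto_const_nhds.div_atTop tendsto_id)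
    rw [sub_zero] at this
    exact ((continuous_arcsin.tendsto _).comp this).div_const 2
  refine ⟨integrableOn_Ioi_deriv_of_nonneg hcont hderiv hnonneg htop, ?_⟩
  rw [integral_Ioi_of_hasDerivAt_of_nonneg hcont hderiv hnonneg htop, sqrt_two_div_limitRoot,
    show √2 * l - (1 + √2 * l) = -1 by ring, arcsin_neg_one]
  ring

end LimitIntegral

lemma sSup_zeroSet_mem_Ioo {X : Type*} [ConditionallyCompleteLinearOrder X] [TopologicalSpace X]
    [OrderTopology X] [DenselyOrdered X] {f : X → ℝ} (hf : Continuous f) {a b : X} (hab : a ≤ b)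
    (ha : f a < 0) (hb : ∀ x, b ≤ x → 0 < f x) :
    f (sSup {x | f x = 0}) = 0 ∧ sSup {x | f x = 0} ∈ Ioo a b := by
  obtain ⟨x, hx, hx0⟩ := intermediate_value_Ioo hab hf.continuousOn ⟨ha, hb b le_rfl⟩
  have hlt : ∀ y ∈ {x | f x = 0}, y < b := fun y hy => not_le.1 fun h => (hb y h).ne' hy
  have hbdd : BddAbove {x | f x = 0} := ⟨b, fun y hy => (hlt y hy).le⟩
  have hmem := (isClosed_eq hf continuous_const).csSup_mem ⟨x, hx0⟩ hbdd
  exact ⟨hmem, hx.1.trans_le (le_csSup hbdd hx0), hlt _ hmem⟩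

section LargestRoot

variable {l : ℝ} {α : Type*} {L : Filter α} {e c : α → ℝ}

lemma rescaledQt_pos_of_le (hl : 2 * l ^ 2 < 1) {e c b u : ℝ} (he : 0 ≤ e)
    (hb : limitRoot l < b) (hc : c + 1 < (1 - 2 * l ^ 2) * (b - limitRoot l) / b) (hbu : b ≤ u) :
    0 < rescaledQt l e c u := by
  have hu : 0 < u := (limitRoot_pos hl).trans_le (hb.le.trans hbu)
  have hQ := mul_sq_le_rescaledQt_limit hl hb hbu
  have : 2 * (c + 1) * u ^ 2 < 2 * ((1 - 2 * l ^ 2) * (b - limitRoot l) / b) * u ^ 2 := by gcongr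
  have : 0 ≤ 2 * e * u ^ 3 := by positivity
  have : rescaledQt l e c u = rescaledQt l 0 (-1) u + 2 * e * u ^ 3 - 2 * (c + 1) * u ^ 2 := by
    simp only [rescaledQt]
    ring
  linarith

lemma eventually_largestRoot_mem_Ioo (hl : 2 * l ^ 2 < 1) (he : Tendsto e L (𝓝[>] 0))
    (hc : Tendsto c L (𝓝 (-1))) {a b : ℝ} (ha : 0 ≤ a) (hau : a < limitRoot l)
    (hb : limitRoot l < b) :
    ∀ᶠ p in L, rescaledQt l (e p) (c p) (largestRoot l (e p) (c p)) = 0 ∧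
      largestRoot l (e p) (c p) ∈ Ioo a b := by
  have hneg : ∀ᶠ p in L, rescaledQt l (e p) (c p) a < 0 :=
    (tendsto_rescaledQt l (tendsto_nhds_of_tendsto_nhdsWithin he) hc
      tendsto_const_nhds).eventually_lt_const (rescaledQt_limit_neg hl ha hau)
  have hgap : 0 < (1 - 2 * l ^ 2) * (b - limitRoot l) / b := by
    have : 0 < b := (limitRoot_pos hl).trans hb
    have : 0 < b - limitRoot l := by linarith
    have : 0 < 1 - 2 * l ^ 2 := by linarith
    positivity
  have hsmall : ∀ᶠ p in L, c p + 1 < (1 - 2 * l ^ 2) * (b - limitRoot l) / b := by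
    have := hc.add_const 1
    rw [neg_add_cancel] at this
    exact this.eventually_lt_const hgap
  filter_upwards [hneg, hsmall, he.eventually self_mem_nhdsWithin] with p hpa hpc hpe
  exact sSup_zeroSet_mem_Ioo (continuous_rescaledQt l (e p) (c p)) (hau.trans hb).le hpa
    fun u hu => rescaledQt_pos_of_le hl (le_of_lt hpe) hb hpc hu

lemma tendsto_largestRoot (hl : 2 * l ^ 2 < 1) (he : Tendsto e L (𝓝[>] 0))
    (hc : Tendsto c L (𝓝 (-1))) :
    Tendsto (fun p => largestRoot l (e p) (c p)) L (𝓝 (limitRoot l)) := by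
  have hu₀ := limitRoot_pos hl
  refine tendsto_order.2 ⟨fun a ha => ?_, fun b hb => ?_⟩
  · filter_upwards [eventually_largestRoot_mem_Ioo hl he hc (le_max_right a 0) (max_lt ha hu₀)
      (lt_add_one _)] with p hp
    exact (le_max_left a 0).trans_lt hp.2.1
  · filter_upwards [eventually_largestRoot_mem_Ioo hl he hc le_rfl hu₀ hb] with p hp
    exact hp.2.2

end LargestRoot

lemma setIntegral_Ioi_comp_add_right {E : Type*} [NormedAddCommGroup E] [NormedSpace ℝ E]
    (f : ℝ → E) (a d : ℝ) : ∫ x in Ioi a, f (x + d) = ∫ x in Ioi (a + d), f x := by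
  rw [← integral_indicator measurableSet_Ioi, ← integral_indicator measurableSet_Ioi]
  conv_rhs => rw [← integral_add_right_eq_self _ d]
  congr 1
  ext x
  simp only [indicator, mem_Ioi, add_lt_add_iff_right]

lemma one_div_mul_sqrt_le_four_mul {x y X Y : ℝ} (hX : 0 < X) (hY : 0 < Y) (hXx : X ≤ 2 * x)
    (hYy : Y ≤ 2 * y) : 1 / (x * √y) ≤ 4 * (1 / (X * √Y)) := by
  have hy : 0 < y := by linarith
  have hsqrt : √Y ≤ 2 * √y :=
    sqrt_le_iff.2 ⟨by positivity, by rw [mul_pow, sq_sqrt hy.le]; linarith⟩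
  have hx : 0 < x := by linarith
  rw [mul_one_div, div_le_div_iff₀ (by positivity) (by positivity)]
  nlinarith [sqrt_nonneg Y]

section Convergence

variable {l : ℝ} {α : Type*} {L : Filter α} {e c : α → ℝ}

lemma eventually_norm_rescaledIntegrand_shift_le (hl : 2 * l ^ 2 < 1)
    (he : Tendsto e L (𝓝[>] 0)) (hc : Tendsto c L (𝓝 (-1))) :
    ∀ᶠ p in L, ∀ u ∈ Ioi (limitRoot l),
      ‖rescaledIntegrand l (e p) (c p) (u + (largestRoot l (e p) (c p) - limitRoot l))‖ ≤
        4 * rescaledIntegrand l 0 (-1) u := by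
  have hu₀ := limitRoot_pos hl
  have he₀ := tendsto_nhds_of_tendsto_nhdsWithin he
  have hR := tendsto_largestRoot hl he hc
  have hslope := tendsto_rescaledQtDeriv l he₀ hc hR
  have hcurv : Tendsto (fun p => 6 * e p * largestRoot l (e p) (c p) - 2 * c p - 4 * l ^ 2) L
      (𝓝 (6 * 0 * limitRoot l - 2 * (-1) - 4 * l ^ 2)) :=
    (((he₀.const_mul 6).mul hR).sub (hc.const_mul 2)).sub tendsto_const_nhds
  have hA : 0 < rescaledQtDeriv l 0 (-1) (limitRoot l) := by
    rw [rescaledQtDeriv_limit_limitRoot hl]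
    positivity
  filter_upwards [eventually_largestRoot_mem_Ioo hl he hc le_rfl hu₀ (lt_add_one _),
    hR.eventually_const_lt (half_lt_self hu₀), hslope.eventually_const_lt (half_lt_self hA),
    hcurv.eventually_const_lt (show 1 - 2 * l ^ 2 < 6 * 0 * limitRoot l - 2 * (-1) - 4 * l ^ 2 by
      linarith),
    he.eventually self_mem_nhdsWithin] with p hroot hRu hRA hRs hpe
  intro u hu
  have ht : 0 < u - limitRoot l := sub_pos.2 hu
  have hv : u + (largestRoot l (e p) (c p) - limitRoot l) =
      largestRoot l (e p) (c p) + (u - limitRoot l) := by ring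
  have hlimit := rescaledQt_add l 0 (-1) (limitRoot l) (u - limitRoot l)
  rw [add_sub_cancel, rescaledQt_limit_limitRoot hl] at hlimit
  have hQ : rescaledQt l 0 (-1) u ≤
      2 * rescaledQt l (e p) (c p) (largestRoot l (e p) (c p) + (u - limitRoot l)) := by
    rw [hlimit, rescaledQt_add, hroot.1]
    have : 0 ≤ 2 * e p * (u - limitRoot l) ^ 2 := by have := le_of_lt hpe; positivity
    nlinarith
  rw [hv, norm_of_nonneg (rescaledIntegrand_nonneg _ _ _ (by linarith))]
  exact one_div_mul_sqrt_le_four_mul (hu₀.trans hu) (rescaledQt_limit_pos hl hu) (by linarith) hQ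

lemma tendsto_rescaledIntegrand_shift (hl : 2 * l ^ 2 < 1) (he : Tendsto e L (𝓝[>] 0))
    (hc : Tendsto c L (𝓝 (-1))) {u : ℝ} (hu : limitRoot l < u) :
    Tendsto
      (fun p => rescaledIntegrand l (e p) (c p) (u + (largestRoot l (e p) (c p) - limitRoot l))) L
      (𝓝 (rescaledIntegrand l 0 (-1) u)) := by
  have hv : Tendsto (fun p => u + (largestRoot l (e p) (c p) - limitRoot l)) L (𝓝 u) := by
    simpa using tendsto_const_nhds.add ((tendsto_largestRoot hl he hc).sub_const (limitRoot l))
  have hpos : 0 < u * √(rescaledQt l 0 (-1) u) :=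
    mul_pos ((limitRoot_pos hl).trans hu) (sqrt_pos.2 (rescaledQt_limit_pos hl hu))
  exact tendsto_const_nhds.div
    (hv.mul (tendsto_rescaledQt l (tendsto_nhds_of_tendsto_nhdsWithin he) hc hv).sqrt) hpos.ne'

theorem tendsto_integral_rescaledIntegrand [L.IsCountablyGenerated] (hl : 2 * l ^ 2 < 1)
    (he : Tendsto e L (𝓝[>] 0)) (hc : Tendsto c L (𝓝 (-1))) :
    Tendsto (fun p => ∫ u in Ioi (largestRoot l (e p) (c p)), rescaledIntegrand l (e p) (c p) u) L
      (𝓝 (π / 4 + arcsin (√2 * l) / 2)) := by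
  obtain ⟨hint, hval⟩ := integral_rescaledIntegrand_limit hl
  have hshift : ∀ p, ∫ u in Ioi (largestRoot l (e p) (c p)), rescaledIntegrand l (e p) (c p) u =
      ∫ u in Ioi (limitRoot l),
        rescaledIntegrand l (e p) (c p) (u + (largestRoot l (e p) (c p) - limitRoot l)) := by
    intro p
    rw [setIntegral_Ioi_comp_add_right, add_sub_cancel]
  simp_rw [hshift, ← hval]
  refine tendsto_integral_filter_of_dominated_convergence _
    (Eventually.of_forall fun p => ((measurable_rescaledIntegrand _ _ _).comp
      (measurable_add_const _)).aestronglyMeasurable) ?_ (hint.const_mul 4) ?_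
  · filter_upwards [eventually_norm_rescaledIntegrand_shift_le hl he hc] with p hp
    exact (ae_restrict_mem measurableSet_Ioi).mono hp
  · exact (ae_restrict_mem measurableSet_Ioi).mono
      fun u hu => tendsto_rescaledIntegrand_shift hl he hc hu

end Convergence

section ChangeOfVariables

variable {l θ : ℝ}

lemma Qt_sin_mul (l θ u : ℝ) :
    Qt l θ (sin θ * u) = sin θ ^ 2 * rescaledQt l (sin θ) (cos θ) u := by
  simp only [Qt, rescaledQt]
  ring

lemma rt_eq_sin_mul_largestRoot (hθ : 0 < sin θ) :
    rt l θ = sin θ * largestRoot l (sin θ) (cos θ) := by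
  have hzero : {z | Qt l θ z = 0} = sin θ • {u | rescaledQt l (sin θ) (cos θ) u = 0} := by
    ext z
    rw [mem_smul_set_iff_inv_smul_mem₀ hθ.ne', mem_ofPred_eq, mem_ofPred_eq, smul_eq_mul]
    conv_lhs => rw [← mul_inv_cancel_left₀ hθ.ne' z, Qt_sin_mul]
    simp [hθ.ne']
  rw [rt, hzero, Real.sSup_smul_of_nonneg hθ.le, smul_eq_mul, largestRoot]

lemma B_eq_integral_rescaledIntegrand (hθ : 0 < sin θ) :
    B l θ = 2 * ∫ u in Ioi (largestRoot l (sin θ) (cos θ)),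
      rescaledIntegrand l (sin θ) (cos θ) u := by
  rw [B, rt_eq_sin_mul_largestRoot hθ, ← integral_comp_mul_left_Ioi' _ _ hθ, smul_eq_mul,
    ← integral_const_mul]
  congr 1
  refine setIntegral_congr_fun measurableSet_Ioi fun u _ => ?_
  rw [Qt_sin_mul, sqrt_mul (sq_nonneg _), sqrt_sq hθ.le, rescaledIntegrand]
  field_simp

end ChangeOfVariables

lemma B_neg (l θ : ℝ) : B l (-θ) = -B (-l) θ := by
  have hQ : Qt l (-θ) = Qt (-l) θ := by
    ext z
    simp only [Qt, sin_neg, cos_neg]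
    ring
  simp only [B, rt, hQ, sin_neg, neg_div, integral_neg, mul_neg]

lemma tendsto_B_nhdsLT_pi {l : ℝ} (hl : 2 * l ^ 2 < 1) :
    Tendsto (B l) (𝓝[<] π) (𝓝 (π / 2 + arcsin (√2 * l))) := by
  have hsin_pos : ∀ᶠ θ in 𝓝[<] π, 0 < sin θ := by
    filter_upwards [Ioo_mem_nhdsLT pi_pos] with θ hθ
    exact sin_pos_of_pos_of_lt_pi hθ.1 hθ.2
  have hsin : Tendsto sin (𝓝[<] π) (𝓝[>] 0) := by
    refine tendsto_nhdsWithin_iff.2 ⟨?_, hsin_pos⟩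
    simpa using (continuous_sin.tendsto π).mono_left nhdsWithin_le_nhds
  have hcos : Tendsto cos (𝓝[<] π) (𝓝 (-1)) := by
    simpa using (continuous_cos.tendsto π).mono_left nhdsWithin_le_nhds
  have hB : (fun θ => 2 * ∫ u in Ioi (largestRoot l (sin θ) (cos θ)),
      rescaledIntegrand l (sin θ) (cos θ) u) =ᶠ[𝓝[<] π] B l := by
    filter_upwards [hsin_pos] with θ hθ
    exact (B_eq_integral_rescaledIntegrand hθ).symm
  convert ((tendsto_integral_rescaledIntegrand hl hsin hcos).const_mul 2).congr' hB using 2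
  ring

end WindingIntegral

/-- lim_{θ→±π∓} B(θ) = ±π/2 + arcsin(√2 λ̃). -/
theorem stmt13 (lam : ℝ) (hlam : 2 * lam ^ 2 < 1) :
    Filter.Tendsto (B lam) (nhdsWithin Real.pi (Set.Iio Real.pi))
        (nhds (Real.pi / 2 + Real.arcsin (Real.sqrt 2 * lam))) ∧
    Filter.Tendsto (B lam) (nhdsWithin (-Real.pi) (Set.Ioi (-Real.pi)))
        (nhds (-(Real.pi / 2) + Real.arcsin (Real.sqrt 2 * lam))) := by
  refine ⟨WindingIntegral.tendsto_B_nhdsLT_pi hlam, ?_⟩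
  have h := ((WindingIntegral.tendsto_B_nhdsLT_pi (l := -lam) (by rwa [neg_sq])).comp
    tendsto_neg_nhdsGT_neg).neg
  rw [mul_neg, arcsin_neg, neg_add, neg_neg] at h
  convert h using 1
  ext θ
  simp [WindingIntegral.B_neg]
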